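/- Let Ω ⊆ ℝ be open and let ψ : Ω → Ω be injective and continuous. Then ψ is run-away if and only if it is strongly run-away, and this holds if and only if ψ has no periodic points (i.e., ψ_n(x) ≠ x for every x ∈ Ω and every n ≥ 1). -/

import Mathlib

/-! A continuous injective self-map of an interval is strictly monotone or antitone. A monotone
one without fixed points moves all points in the same direction, so its orbits leave every compact
subset (a bounded monotone orbit would converge to a fixed point); an antitone one is treated
through its square.

For open `Ω ⊆ ℝ`, `ψ` maps components of `Ω` into components and a compact set meets only
finitely many of them. If the orbit of the component of `x` visits the component `D` at two times
`n₁ < n₂`, then `ψ^[n₂ - n₁]` maps `D` into itself and the interval argument applies to it, one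
residue class modulo `n₂ - n₁` at a time; otherwise it eventually stays away from `D`. -/

open Set Function Filter Topology

theorem Nat.eventually_atTop_of_forall_mul_add {P : ℕ → Prop} {p : ℕ} (hp : 0 < p)
    (h : ∀ r < p, ∀ᶠ m in atTop, P (p * m + r)) : ∀ᶠ n in atTop, P n := by
  have hall : ∀ᶠ m in atTop, ∀ r ∈ Finset.range p, P (p * m + r) :=
    (eventually_all_finset _).2 fun r hr => h r (Finset.mem_range.1 hr)
  obtain ⟨M, hM⟩ := eventually_atTop.1 hall
  refine eventually_atTop.2 ⟨p * M, fun n hn => ?_⟩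
  rw [← Nat.div_add_mod n p]
  exact hM _ ((Nat.le_div_iff_mul_le hp).2 (by linarith)) _ (Finset.mem_range.2 (Nat.mod_lt n hp))

theorem StrictMonoOn.iterate {α : Type*} [Preorder α] {g : α → α} {s : Set α}
    (hg : StrictMonoOn g s) (hs : MapsTo g s s) (n : ℕ) : StrictMonoOn g^[n] s := by
  induction n with
  | zero => exact strictMonoOn_id
  | succ n ih => rw [iterate_succ]; exact ih.comp hg hs

theorem isFixedPt_of_tendsto_iterate_of_continuousWithinAt {α : Type*} [TopologicalSpace α]
    [T2Space α] {f : α → α} {s : Set α} {x y : α}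
    (hy : Tendsto (fun n => f^[n] x) atTop (𝓝 y)) (hf : ContinuousWithinAt f s y)
    (hs : ∀ n, f^[n] x ∈ s) : IsFixedPt f y := by
  refine tendsto_nhds_unique ((tendsto_add_atTop_iff_nat 1).1 ?_) hy
  simp only [iterate_succ' f]
  exact hf.tendsto.comp (tendsto_nhdsWithin_iff.2 ⟨hy, .of_forall hs⟩)

theorem Set.MapsTo.monotone_iterate_apply {α : Type*} [Preorder α] {g : α → α} {s : Set α}
    (hs : MapsTo g s s) (hle : ∀ t ∈ s, t ≤ g t) {x : α} (hx : x ∈ s) :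
    Monotone fun n => g^[n] x :=
  monotone_nat_of_le_succ fun n => by
    rw [iterate_succ_apply']
    exact hle _ (hs.iterate n hx)

section IntervalDynamics

variable {α : Type*} [ConditionallyCompleteLinearOrder α] [TopologicalSpace α] [OrderTopology α]
  {D K : Set α} {g : α → α}

theorem Set.OrdConnected.exists_lt_iterate_apply (hD : D.OrdConnected) (hm : MapsTo g D D)
    (hc : ContinuousOn g D) (hlt : ∀ t ∈ D, t < g t) {x b : α} (hx : x ∈ D) (hb : b ∈ D) :
    ∃ n, b < g^[n] x := by
  by_contra! hbound
  have horbit := hm.monotone_iterate_apply (fun t ht => (hlt t ht).le) hx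
  have hbdd : BddAbove (range fun n => g^[n] x) := ⟨b, forall_mem_range.2 hbound⟩
  have hℓ : (⨆ n, g^[n] x) ∈ D := hD.out hx hb ⟨le_ciSup hbdd 0, ciSup_le hbound⟩
  exact (hlt _ hℓ).ne' <| isFixedPt_of_tendsto_iterate_of_continuousWithinAt
    (tendsto_atTop_ciSup horbit hbdd) (hc _ hℓ) fun n => hm.iterate n hx

theorem Set.OrdConnected.eventually_disjoint_image_iterate_of_lt (hD : D.OrdConnected)
    (hm : MapsTo g D D) (hc : ContinuousOn g D) (hmono : StrictMonoOn g D)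
    (hlt : ∀ t ∈ D, t < g t) (hK : IsCompact K) (hKD : K ⊆ D) :
    ∀ᶠ m in atTop, Disjoint (g^[m] '' K) K := by
  rcases K.eq_empty_or_nonempty with rfl | hne
  · simp
  obtain ⟨a, haK, ha⟩ := hK.exists_isLeast hne
  obtain ⟨b, hbK, hb⟩ := hK.exists_isGreatest hne
  obtain ⟨N, hN⟩ := hD.exists_lt_iterate_apply hm hc hlt (hKD haK) (hKD hbK)
  filter_upwards [eventually_ge_atTop N] with m hNm
  refine disjoint_left.2 ?_
  rintro _ ⟨w, hw, rfl⟩ hmw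
  have horbit : g^[N] a ≤ g^[m] a :=
    hm.monotone_iterate_apply (fun t ht => (hlt t ht).le) (hKD haK) hNm
  have hwa : g^[m] a ≤ g^[m] w := (hmono.iterate hm m).monotoneOn (hKD haK) (hKD hw) (ha hw)
  exact (hN.trans_le (horbit.trans hwa)).not_ge (hb hmw)

theorem Set.OrdConnected.eventually_disjoint_image_iterate_of_gt (hD : D.OrdConnected)
    (hm : MapsTo g D D) (hc : ContinuousOn g D) (hmono : StrictMonoOn g D)
    (hgt : ∀ t ∈ D, g t < t) (hK : IsCompact K) (hKD : K ⊆ D) :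
    ∀ᶠ m in atTop, Disjoint (g^[m] '' K) K :=
  Set.OrdConnected.eventually_disjoint_image_iterate_of_lt (α := αᵒᵈ) hD.dual hm hc hmono.dual hgt
    hK hKD

theorem IsPreconnected.forall_lt_or_forall_gt (hD : IsPreconnected D) (hc : ContinuousOn g D)
    (hfix : ∀ t ∈ D, g t ≠ t) : (∀ t ∈ D, t < g t) ∨ ∀ t ∈ D, g t < t := by
  by_contra! h
  obtain ⟨⟨a, ha, hga⟩, ⟨b, hb, hgb⟩⟩ := h
  obtain ⟨t, ht, hgt⟩ := hD.intermediate_value₂ ha hb hc continuousOn_id hga hgb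
  exact hfix t ht hgt

theorem IsPreconnected.eventually_disjoint_image_iterate_of_strictMonoOn (hD : IsPreconnected D)
    (hm : MapsTo g D D) (hc : ContinuousOn g D) (hmono : StrictMonoOn g D)
    (hfix : ∀ t ∈ D, g t ≠ t) (hK : IsCompact K) (hKD : K ⊆ D) :
    ∀ᶠ m in atTop, Disjoint (g^[m] '' K) K := by
  rcases hD.forall_lt_or_forall_gt hc hfix with hlt | hgt
  · exact hD.ordConnected.eventually_disjoint_image_iterate_of_lt hm hc hmono hlt hK hKD
  · exact hD.ordConnected.eventually_disjoint_image_iterate_of_gt hm hc hmono hgt hK hKD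

variable [DenselyOrdered α]

theorem Set.OrdConnected.strictMonoOn_or_strictAntiOn (hD : D.OrdConnected)
    (hc : ContinuousOn g D) (hi : InjOn g D) : StrictMonoOn g D ∨ StrictAntiOn g D := by
  by_cases hpair : ∃ a ∈ D, ∃ b ∈ D, a < b ∧ g a < g b
  · obtain ⟨a, ha, b, hb, hab, hgab⟩ := hpair
    refine .inl fun x hx y hy hxy => ?_
    set I := Icc (min a x) (max b y)
    have hID : I ⊆ D := hD.out (min_rec' (· ∈ D) ha hx) (max_rec' (· ∈ D) hb hy)
    have haI : a ∈ I := ⟨min_le_left a x, hab.le.trans (le_max_left b y)⟩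
    have hbI : b ∈ I := ⟨(min_le_left a x).trans hab.le, le_max_left b y⟩
    have hxI : x ∈ I := ⟨min_le_right a x, hxy.le.trans (le_max_right b y)⟩
    have hyI : y ∈ I := ⟨(min_le_right a x).trans hxy.le, le_max_right b y⟩
    rcases (hc.mono hID).strictMonoOn_of_injOn_Icc' (haI.1.trans haI.2) (hi.mono hID)
      with hI | hI
    · exact hI hxI hyI hxy
    · exact absurd hgab (hI haI hbI hab).not_gt
  · push Not at hpair
    exact .inr fun x hx y hy hxy =>
      (hpair x hx y hy hxy).lt_of_ne (hi.ne hy hx hxy.ne')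

theorem IsPreconnected.eventually_disjoint_image_iterate (hD : IsPreconnected D)
    (hm : MapsTo g D D) (hc : ContinuousOn g D) (hi : InjOn g D) (hfix : ∀ t ∈ D, g t ≠ t)
    (hfix₂ : ∀ t ∈ D, g (g t) ≠ t) (hK : IsCompact K) (hKD : K ⊆ D) :
    ∀ᶠ m in atTop, Disjoint (g^[m] '' K) K := by
  rcases hD.ordConnected.strictMonoOn_or_strictAntiOn hc hi with hmono | hanti
  · exact hD.eventually_disjoint_image_iterate_of_strictMonoOn hm hc hmono hfix hK hKD
  -- an orientation-reversing `g` is handled through `g^[2]`, applied to `K ∪ g '' K`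
  set K' := K ∪ g '' K
  have hK' : IsCompact K' := hK.union (hK.image_of_continuousOn (hc.mono hKD))
  have hK'D : K' ⊆ D := union_subset hKD (hm.mono_left hKD).image_subset
  have h₂ := hD.eventually_disjoint_image_iterate_of_strictMonoOn (hm.iterate 2)
    (hc.iterate hm 2) (hanti.comp hanti hm) hfix₂ hK' hK'D
  refine Nat.eventually_atTop_of_forall_mul_add two_pos fun r hr => ?_
  have hr' : g^[r] '' K ⊆ K' := by
    interval_cases r
    · exact (image_id K).subset.trans subset_union_left
    · exact subset_union_right
  filter_upwards [h₂] with m hm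
  rw [iterate_add, iterate_mul, image_comp]
  exact hm.mono (image_mono hr') subset_union_left

end IntervalDynamics

section RunAway

variable {X : Type*} [TopologicalSpace X]

def IsRunAway (f : X → X) : Prop :=
  ∀ K : Set X, IsCompact K → ∃ n : ℕ, 1 ≤ n ∧ (f^[n] '' K) ∩ K = ∅

def IsStronglyRunAway (f : X → X) : Prop :=
  ∀ K : Set X, IsCompact K → ∃ N : ℕ, ∀ n, N ≤ n → (f^[n] '' K) ∩ K = ∅

def IsStronglyRunAwayOnInvariantComponents (f : X → X) : Prop :=
  ∀ x p, 0 < p → f^[p] x ∈ connectedComponent x → ∀ K ⊆ connectedComponent x, IsCompact K →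
    ∀ᶠ m in atTop, Disjoint ((f^[p])^[m] '' K) K

variable {f : X → X}

theorem IsStronglyRunAway.isRunAway (h : IsStronglyRunAway f) : IsRunAway f := fun K hK => by
  obtain ⟨N, hN⟩ := h K hK
  exact ⟨N + 1, Nat.le_add_left 1 N, hN _ N.le_succ⟩

theorem IsRunAway.iterate_ne_self (h : IsRunAway f) (x : X) {n : ℕ} (hn : 1 ≤ n) :
    f^[n] x ≠ x := by
  intro hx
  set orbit := (fun i => f^[i] x) '' Iio n
  obtain ⟨m, -, hm⟩ := h orbit ((finite_Iio n).image _).isCompact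
  have hmem : f^[m] x ∈ (f^[m] '' orbit) ∩ orbit :=
    ⟨mem_image_of_mem _ ⟨0, hn, rfl⟩,
      ⟨m % n, Nat.mod_lt m hn, IsPeriodicPt.iterate_mod_apply hx m⟩⟩
  rwa [hm] at hmem

theorem IsStronglyRunAwayOnInvariantComponents.eventually_disjoint_of_mem
    (hf : Continuous f) (h : IsStronglyRunAwayOnInvariantComponents f) {x : X} {p : ℕ}
    (hp : 0 < p) (hx : f^[p] x ∈ connectedComponent x) {A B : Set X}
    (hA : IsCompact A) (hAx : A ⊆ connectedComponent x)
    (hB : IsCompact B) (hBx : B ⊆ connectedComponent x) :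
    ∀ᶠ n in atTop, Disjoint (f^[n] '' A) B := by
  have hinv : MapsTo f^[p] (connectedComponent x) (connectedComponent x) :=
    (hf.iterate p).mapsTo_connectedComponent x |>.mono_right (connectedComponent_eq hx).ge
  refine Nat.eventually_atTop_of_forall_mul_add hp fun r _ => ?_
  by_cases hr : f^[r] x ∈ connectedComponent x
  · have hrA : f^[r] '' A ⊆ connectedComponent x :=
      (image_mono hAx).trans <| ((hf.iterate r).image_connectedComponent_subset x).trans
        (connectedComponent_eq hr).ge
    filter_upwards [h x p hp hx _ (union_subset hrA hBx) ((hA.image (hf.iterate r)).union hB)]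
      with m hm
    rw [iterate_add, iterate_mul, image_comp]
    exact hm.mono (image_mono subset_union_left) subset_union_right
  · refine .of_forall fun m => ?_
    rw [add_comm, iterate_add, iterate_mul, image_comp]
    refine (connectedComponent_disjoint fun heq => hr (heq ▸ mem_connectedComponent)).mono
      ?_ hBx
    exact (image_mono ((hinv.iterate m).image_subset.trans' (image_mono hAx))).trans
      ((hf.iterate r).image_connectedComponent_subset x)

theorem IsStronglyRunAwayOnInvariantComponents.eventually_disjoint (hf : Continuous f)
    (h : IsStronglyRunAwayOnInvariantComponents f) {x y : X} {A B : Set X}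
    (hA : IsCompact A) (hAx : A ⊆ connectedComponent x)
    (hB : IsCompact B) (hBy : B ⊆ connectedComponent y) :
    ∀ᶠ n in atTop, Disjoint (f^[n] '' A) B := by
  by_cases hfreq : ∃ᶠ n in atTop, f^[n] x ∈ connectedComponent y
  · obtain ⟨n₁, -, hn₁⟩ := frequently_atTop.1 hfreq 0
    obtain ⟨n₂, hn₁₂, hn₂⟩ := frequently_atTop.1 hfreq (n₁ + 1)
    have hy : connectedComponent y = connectedComponent (f^[n₁] x) := connectedComponent_eq hn₁
    have hinv : f^[n₂ - n₁] (f^[n₁] x) ∈ connectedComponent (f^[n₁] x) := by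
      rwa [← iterate_add_apply, Nat.sub_add_cancel (by omega), ← hy]
    have hA' : f^[n₁] '' A ⊆ connectedComponent (f^[n₁] x) :=
      (image_mono hAx).trans ((hf.iterate n₁).image_connectedComponent_subset x)
    have hshift := h.eventually_disjoint_of_mem hf (Nat.sub_pos_of_lt hn₁₂) hinv
      (hA.image (hf.iterate n₁)) hA' hB (hy ▸ hBy)
    filter_upwards [(tendsto_sub_atTop_nat n₁).eventually hshift, eventually_ge_atTop n₁]
      with n hn hle
    rwa [← image_comp, ← iterate_add, Nat.sub_add_cancel hle] at hn
  · filter_upwards [not_frequently.1 hfreq] with n hn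
    refine (connectedComponent_disjoint fun heq => hn (heq ▸ mem_connectedComponent)).mono
      ?_ hBy
    exact (image_mono hAx).trans ((hf.iterate n).image_connectedComponent_subset x)

theorem IsStronglyRunAwayOnInvariantComponents.isStronglyRunAway [LocallyConnectedSpace X]
    (hf : Continuous f) (h : IsStronglyRunAwayOnInvariantComponents f) :
    IsStronglyRunAway f := by
  intro K hK
  obtain ⟨t, ht⟩ := hK.elim_finite_subcover (fun x => connectedComponent x)
    (fun _ => isOpen_connectedComponent) fun x _ => mem_iUnion.2 ⟨x, mem_connectedComponent⟩
  have hKt : K = ⋃ i ∈ t, K ∩ connectedComponent i := by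
    rw [← inter_iUnion₂, inter_eq_left.2 ht]
  have hpieces : ∀ᶠ n in atTop, ∀ i ∈ t, ∀ j ∈ t,
      Disjoint (f^[n] '' (K ∩ connectedComponent i)) (K ∩ connectedComponent j) := by
    simp only [eventually_all_finset]
    exact fun i _ j _ => h.eventually_disjoint hf (hK.inter_right isClosed_connectedComponent)
      inter_subset_right (hK.inter_right isClosed_connectedComponent) inter_subset_right
  obtain ⟨N, hN⟩ := eventually_atTop.1 hpieces
  refine ⟨N, fun n hn => ?_⟩
  have hdisj : Disjoint (f^[n] '' ⋃ i ∈ t, K ∩ connectedComponent i)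
      (⋃ j ∈ t, K ∩ connectedComponent j) := by
    simp only [image_iUnion₂, disjoint_iUnion₂_left, disjoint_iUnion₂_right]
    exact fun j hj i hi => hN n hn i hi j hj
  rwa [← hKt, disjoint_iff_inter_eq_empty] at hdisj

end RunAway

theorem isStronglyRunAwayOnInvariantComponents_of_injective {α : Type*}
    [ConditionallyCompleteLinearOrder α] [TopologicalSpace α] [OrderTopology α] [DenselyOrdered α]
    {Ω : Set α} {ψ : Ω → Ω} (hinj : Injective ψ) (hcont : Continuous ψ)
    (hper : ∀ x : Ω, ∀ n : ℕ, 1 ≤ n → ψ^[n] x ≠ x) :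
    IsStronglyRunAwayOnInvariantComponents ψ := by
  intro x p hp hx K hKx hK
  -- extend `ψ` to `α`, so that the interval lemmas apply to the image of the component
  set Ψ : α → α := extend Subtype.val (Subtype.val ∘ ψ) id
  have hsemi : Semiconj Subtype.val ψ Ψ := fun z =>
    (Subtype.val_injective.extend_apply (Subtype.val ∘ ψ) id z).symm
  have hcomp (n : ℕ) : Ψ^[n] ∘ Subtype.val = Subtype.val ∘ ψ^[n] :=
    (hsemi.iterate_right n).comp_eq.symm
  set D := Subtype.val '' connectedComponent x
  have hD : IsPreconnected D :=
    isPreconnected_connectedComponent.image _ continuous_subtype_val.continuousOn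
  have hfix (n : ℕ) (hn : 1 ≤ n) : ∀ t ∈ D, Ψ^[n] t ≠ t := by
    rintro _ ⟨z, -, rfl⟩ h
    exact hper z n hn (Subtype.val_injective ((hsemi.iterate_right n z).trans h))
  have hmaps : MapsTo Ψ^[p] D D := by
    have hC := (hcont.iterate p).mapsTo_connectedComponent x |>.mono_right
      (connectedComponent_eq hx).ge
    rintro _ ⟨z, hz, rfl⟩
    exact ⟨_, hC hz, hsemi.iterate_right p z⟩
  have hcont' : ContinuousOn Ψ^[p] D := by
    rw [Topology.IsInducing.subtypeVal.continuousOn_image_iff, hcomp]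
    exact (continuous_subtype_val.comp (hcont.iterate p)).continuousOn
  have hinj' : InjOn Ψ^[p] D := by
    refine InjOn.image_of_comp ?_
    rw [hcomp]
    exact (Subtype.val_injective.comp (hinj.iterate p)).injOn
  have hfix₂ : ∀ t ∈ D, Ψ^[p] (Ψ^[p] t) ≠ t := fun t ht => by
    rw [← iterate_add_apply]
    exact hfix (p + p) (by omega) t ht
  filter_upwards [hD.eventually_disjoint_image_iterate hmaps hcont' hinj' (hfix p hp) hfix₂
    (hK.image continuous_subtype_val) (image_mono hKx)] with m hm
  rwa [← iterate_mul, ← image_comp, hcomp, image_comp,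
    disjoint_image_iff Subtype.val_injective, iterate_mul] at hm

/-- For an injective continuous self-map `ψ` of an open set `Ω ⊆ ℝ`, being run-away,
being strongly run-away, and having no periodic points are equivalent. -/
theorem stmt_18 (Ω : Set ℝ) (hΩ : IsOpen Ω)
    (ψ : ↥Ω → ↥Ω) (hinj : Function.Injective ψ) (hcont : Continuous ψ) :
    List.TFAE [
      ∀ K : Set ↥Ω, IsCompact K → ∃ n : ℕ, 1 ≤ n ∧ (ψ^[n] '' K) ∩ K = ∅,
      ∀ K : Set ↥Ω, IsCompact K → ∃ N : ℕ, ∀ n, N ≤ n → (ψ^[n] '' K) ∩ K = ∅,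
      ∀ x : ↥Ω, ∀ n : ℕ, 1 ≤ n → ψ^[n] x ≠ x ] := by
  have := hΩ.locallyConnectedSpace
  tfae_have 2 → 1 := IsStronglyRunAway.isRunAway
  tfae_have 1 → 3 := fun h x _ hn => IsRunAway.iterate_ne_self h x hn
  tfae_have 3 → 2 := fun h =>
    (isStronglyRunAwayOnInvariantComponents_of_injective hinj hcont h).isStronglyRunAway hcont
  tfae_finish
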